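/- Using the shortest pilots with full pilot energy is optimal for the uplink variables of P2: if (τ, {p_m^{up}}, {p_m^{dl}}) is a feasible point of P2, then (U+G, {E_m/(U+G)}, {p_m^{dl}}) is also feasible, and its objective value Σ_m α_m SE_m is greater than or equal to that of the original point. -/

import Mathlib

open Finset

noncomputable section

/-- Effective estimation quality `θ_m = τ p_m^{up} β_m² / (1 + τ p_m^{up} β_m)`. -/
def thetaUn {U : ℕ} (β : Fin U → ℝ) (τ : ℕ) (pup : Fin U → ℝ) (m : Fin U) : ℝ :=
  (τ : ℝ) * pup m * (β m) ^ 2 / (1 + (τ : ℝ) * pup m * β m)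

/-- `SINR_m = N p_m^{dl} θ_m / (1 + β_m (P_mu + Σ_u p_u^{dl}))`. -/
def sinrUn {U : ℕ} (N : ℕ) (Pmu : ℝ) (β : Fin U → ℝ) (τ : ℕ)
    (pup pdl : Fin U → ℝ) (m : Fin U) : ℝ :=
  (N : ℝ) * pdl m * thetaUn β τ pup m / (1 + β m * (Pmu + ∑ u, pdl u))

/-- `SE_m = (1 - τ/T) log₂(1 + SINR_m)`. -/
def seUn {U : ℕ} (N T : ℕ) (Pmu : ℝ) (β : Fin U → ℝ) (τ : ℕ)
    (pup pdl : Fin U → ℝ) (m : Fin U) : ℝ :=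
  (1 - (τ : ℝ) / (T : ℝ)) * Real.logb 2 (1 + sinrUn N Pmu β τ pup pdl m)

/-- The weighted sum spectral efficiency objective `Σ_m α_m SE_m` of problem P2. -/
def objUn {U : ℕ} (N T : ℕ) (Pmu : ℝ) (β α : Fin U → ℝ) (τ : ℕ)
    (pup pdl : Fin U → ℝ) : ℝ :=
  ∑ m, α m * seUn N T Pmu β τ pup pdl m

/-- Feasibility for problem P2 with fixed multicast power `Pmu`. -/
def feasUn {U : ℕ} (G T : ℕ) (P Pmu : ℝ) (E : Fin U → ℝ) (τ : ℕ)
    (pup pdl : Fin U → ℝ) : Prop :=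
  U + G ≤ τ ∧ τ ≤ T ∧
    (∀ m, 0 ≤ pup m ∧ (τ : ℝ) * pup m ≤ E m) ∧
    (∀ m, 0 ≤ pdl m) ∧ ∑ m, pdl m ≤ P - Pmu

/-!
Shortening the pilots to `τ = U + G` can only enlarge the prefactor `1 - τ/T`, and spending the
full energy `E_m` on them maximises the received pilot energy `τ p_m^{up}`, on which `θ_m` is
increasing. Since `SINR_m` is increasing in `θ_m` and nonnegative, every `SE_m` can only grow.
-/

lemma estimationQuality_monotoneOn {b : ℝ} (hb : 0 ≤ b) :
    MonotoneOn (fun x : ℝ => x * b ^ 2 / (1 + x * b)) (Set.Ici 0) := by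
  intro x hx y _ hxy
  have hx : 0 ≤ x := hx
  rw [div_le_div_iff₀ (by positivity) (by nlinarith)]
  nlinarith [mul_nonneg (mul_nonneg hb hb) (sub_nonneg.2 hxy)]

section Unicast

variable {U : ℕ} {β : Fin U → ℝ} {m : Fin U}

lemma thetaUn_nonneg {τ : ℕ} {pup : Fin U → ℝ} (hβ : 0 ≤ β m) (hpup : 0 ≤ pup m) :
    0 ≤ thetaUn β τ pup m := by
  unfold thetaUn
  positivity

lemma thetaUn_le_thetaUn {τ τ' : ℕ} {pup pup' : Fin U → ℝ} (hβ : 0 ≤ β m)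
    (hpup : 0 ≤ pup m) (h : (τ : ℝ) * pup m ≤ τ' * pup' m) :
    thetaUn β τ pup m ≤ thetaUn β τ' pup' m :=
  estimationQuality_monotoneOn hβ (Set.mem_Ici.2 (by positivity))
    (Set.mem_Ici.2 ((by positivity : (0 : ℝ) ≤ τ * pup m).trans h)) h

variable {N : ℕ} {Pmu : ℝ} {pdl : Fin U → ℝ}

lemma sinrUn_nonneg {τ : ℕ} {pup : Fin U → ℝ} (hβ : 0 ≤ β m) (hPmu : 0 ≤ Pmu)
    (hdl : ∀ u, 0 ≤ pdl u) (hpup : 0 ≤ pup m) :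
    0 ≤ sinrUn N Pmu β τ pup pdl m := by
  have := thetaUn_nonneg (τ := τ) hβ hpup
  have := hdl m
  have : 0 ≤ ∑ u, pdl u := sum_nonneg fun u _ => hdl u
  unfold sinrUn
  positivity

lemma sinrUn_le_sinrUn {τ τ' : ℕ} {pup pup' : Fin U → ℝ} (hβ : 0 ≤ β m)
    (hPmu : 0 ≤ Pmu) (hdl : ∀ u, 0 ≤ pdl u)
    (hθ : thetaUn β τ pup m ≤ thetaUn β τ' pup' m) :
    sinrUn N Pmu β τ pup pdl m ≤ sinrUn N Pmu β τ' pup' pdl m := by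
  have := hdl m
  have : 0 ≤ ∑ u, pdl u := sum_nonneg fun u _ => hdl u
  exact div_le_div_of_nonneg_right (mul_le_mul_of_nonneg_left hθ (by positivity))
    (by positivity)

lemma seUn_le_seUn {T τ τ' : ℕ} {pup pup' : Fin U → ℝ} (hτ' : τ' ≤ τ) (hτ : τ ≤ T)
    (hsinr : 0 ≤ sinrUn N Pmu β τ pup pdl m)
    (hle : sinrUn N Pmu β τ pup pdl m ≤ sinrUn N Pmu β τ' pup' pdl m) :
    seUn N T Pmu β τ pup pdl m ≤ seUn N T Pmu β τ' pup' pdl m := by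
  have hpre : 0 ≤ 1 - (τ : ℝ) / T :=
    sub_nonneg.2 (div_le_one_of_le₀ (by exact_mod_cast hτ) (by positivity))
  have hpre_le : 1 - (τ : ℝ) / T ≤ 1 - (τ' : ℝ) / T := by gcongr
  have hlog_nonneg : 0 ≤ Real.logb 2 (1 + sinrUn N Pmu β τ pup pdl m) :=
    Real.logb_nonneg one_lt_two (by linarith)
  have hlog_le : Real.logb 2 (1 + sinrUn N Pmu β τ pup pdl m) ≤
      Real.logb 2 (1 + sinrUn N Pmu β τ' pup' pdl m) :=
    Real.logb_le_logb_of_le one_lt_two (by linarith) (by linarith)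
  exact mul_le_mul hpre_le hlog_le hlog_nonneg (hpre.trans hpre_le)

end Unicast

lemma objUn_le_objUn {U N T : ℕ} {Pmu : ℝ} {β α : Fin U → ℝ} {τ τ' : ℕ}
    {pup pup' pdl : Fin U → ℝ} (hα : ∀ m, 0 ≤ α m)
    (hse : ∀ m, seUn N T Pmu β τ pup pdl m ≤ seUn N T Pmu β τ' pup' pdl m) :
    objUn N T Pmu β α τ pup pdl ≤ objUn N T Pmu β α τ' pup' pdl :=
  sum_le_sum fun m _ => mul_le_mul_of_nonneg_left (hse m) (hα m)

section Feasibility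

variable {U G T : ℕ} {P Pmu : ℝ} {E : Fin U → ℝ} {τ : ℕ} {pup pdl : Fin U → ℝ}

lemma feasUn.energy_nonneg (h : feasUn G T P Pmu E τ pup pdl) (m : Fin U) : 0 ≤ E m :=
  (mul_nonneg (Nat.cast_nonneg τ) (h.2.2.1 m).1).trans (h.2.2.1 m).2

-- `m` witnesses `U + G ≠ 0`, so the division by `U + G` is not the junk `x / 0 = 0`.
lemma shortestPilot_mul_fullEnergy (E : Fin U → ℝ) (m : Fin U) :
    ((U + G : ℕ) : ℝ) * (E m / ((U + G : ℕ) : ℝ)) = E m :=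
  mul_div_cancel₀ _ (Nat.cast_ne_zero.2 (by have := m.pos; omega))

lemma feasUn.shortestPilot_fullEnergy (h : feasUn G T P Pmu E τ pup pdl) :
    feasUn G T P Pmu E (U + G) (fun m => E m / ((U + G : ℕ) : ℝ)) pdl := by
  refine ⟨le_rfl, h.1.trans h.2.1, fun m => ⟨?_, (shortestPilot_mul_fullEnergy E m).le⟩,
    h.2.2.2⟩
  exact div_nonneg (h.energy_nonneg m) (Nat.cast_nonneg _)

lemma feasUn.pilotEnergy_le_fullEnergy (h : feasUn G T P Pmu E τ pup pdl) (m : Fin U) :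
    (τ : ℝ) * pup m ≤ ((U + G : ℕ) : ℝ) * (E m / ((U + G : ℕ) : ℝ)) :=
  (shortestPilot_mul_fullEnergy E m).symm ▸ (h.2.2.1 m).2

end Feasibility

theorem sse_shortest_pilots_full_energy_better_general
    (U G : ℕ) (N : ℕ) (T : ℕ)
    (P : ℝ)
    (β E α : Fin U → ℝ)
    (hβ : ∀ m, 0 < β m) (hα : ∀ m, 0 < α m)
    (Pmu : ℝ) (hPmu0 : 0 ≤ Pmu)
    (τ : ℕ) (pup pdl : Fin U → ℝ)
    (hfeas : feasUn G T P Pmu E τ pup pdl) :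
    feasUn G T P Pmu E (U + G) (fun m => E m / ((U + G : ℕ) : ℝ)) pdl ∧
    objUn N T Pmu β α τ pup pdl ≤
      objUn N T Pmu β α (U + G) (fun m => E m / ((U + G : ℕ) : ℝ)) pdl := by
  refine ⟨hfeas.shortestPilot_fullEnergy, objUn_le_objUn (fun m => (hα m).le) fun m => ?_⟩
  have ⟨hτ, hτT, hup, hdl, _⟩ := hfeas
  have hθ : thetaUn β τ pup m ≤ thetaUn β (U + G) (fun m => E m / ((U + G : ℕ) : ℝ)) m :=
    thetaUn_le_thetaUn (hβ m).le (hup m).1 (hfeas.pilotEnergy_le_fullEnergy m)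
  exact seUn_le_seUn hτ hτT (sinrUn_nonneg (hβ m).le hPmu0 hdl (hup m).1)
    (sinrUn_le_sinrUn (hβ m).le hPmu0 hdl hθ)

/-- using the shortest pilots `τ* = U+G` with full pilot energy
`p_m^{up*} = E_m/(U+G)` is optimal for the uplink variables of P2: it preserves
feasibility and never decreases the weighted sum SE objective. -/
theorem sse_shortest_pilots_full_energy_better
    (U G : ℕ) (hU : 1 ≤ U) (N : ℕ) (hN : 1 ≤ N) (T : ℕ) (hT : U + G ≤ T)
    (P : ℝ) (hP : 0 < P)
    (β E α : Fin U → ℝ)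
    (hβ : ∀ m, 0 < β m) (hE : ∀ m, 0 < E m) (hα : ∀ m, 0 < α m)
    (Pmu : ℝ) (hPmu0 : 0 ≤ Pmu) (hPmuP : Pmu ≤ P)
    (τ : ℕ) (pup pdl : Fin U → ℝ)
    (hfeas : feasUn G T P Pmu E τ pup pdl) :
    feasUn G T P Pmu E (U + G) (fun m => E m / ((U + G : ℕ) : ℝ)) pdl ∧
    objUn N T Pmu β α τ pup pdl ≤
      objUn N T Pmu β α (U + G) (fun m => E m / ((U + G : ℕ) : ℝ)) pdl :=
  sse_shortest_pilots_full_energy_better_general U G N T P β E α hβ hα Pmu hPmu0 τ pup pdl hfeas
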